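/- For every y ∈ Y one has ‖A^{1/2} y‖ = ‖P₀ y‖ and ‖(1 − A)^{1/2} y‖ = ‖P₁ y‖, where A^{1/2} and (1 − A)^{1/2} are the positive square roots of A and 1 − A. Moreover, there exist isometric isomorphisms (unitaries) u₀ : Z₀ → Z and u₁ : Z₁ → Z such that A^{1/2} z = u₀(P₀ z) and (1 − A)^{1/2} z = u₁(P₁ z) for all z ∈ Z. -/

import Mathlib

open scoped InnerProductSpace

variable {H₀ H₁ : Type*} [NormedAddCommGroup H₀] [InnerProductSpace ℂ H₀] [CompleteSpace H₀]
  [NormedAddCommGroup H₁] [InnerProductSpace ℂ H₁] [CompleteSpace H₁]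

/-- First coordinate projection `H₀ ⊕₂ H₁ → H₀` as a linear map. -/
noncomputable def P0 : WithLp 2 (H₀ × H₁) →ₗ[ℂ] H₀ :=
  (LinearMap.fst ℂ H₀ H₁) ∘ₗ (WithLp.linearEquiv 2 ℂ (H₀ × H₁)).toLinearMap

/-- Second coordinate projection `H₀ ⊕₂ H₁ → H₁` as a linear map. -/
noncomputable def P1 : WithLp 2 (H₀ × H₁) →ₗ[ℂ] H₁ :=
  (LinearMap.snd ℂ H₀ H₁) ∘ₗ (WithLp.linearEquiv 2 ℂ (H₀ × H₁)).toLinearMap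

/-!
Since `S` is symmetric, `‖S y‖² = re ⟪S² y, y⟫`, which is `‖P₀ y‖²` if `S² = A` and
`‖y‖² - ‖P₀ y‖² = ‖P₁ y‖²` if `S² = 1 - A`. Hence `P₀ z ↦ S z` (resp. `P₁ z ↦ S z`) is a
well-defined isometry on `P₀ Z` (resp. `P₁ Z`) and extends to the closure. In both cases `S`
commutes with `A`, so it preserves `Y₀ ⊔ Y₁` and, being symmetric, its orthogonal complement `Z`.
As `ker S ⊆ ker S²` lies in `Y₀ ⊔ Y₁`, `S` is injective on `Z`, so its restriction to `Z` has
dense range; the extended isometry is therefore onto `Z`.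
-/

open Submodule RCLike

theorem Submodule.exists_linearIsometryEquiv_topologicalClosure_map {𝕜 E F G : Type*}
    [NormedField 𝕜] [AddCommGroup E] [Module 𝕜 E]
    [NormedAddCommGroup F] [NormedSpace 𝕜 F] [CompleteSpace F]
    [NormedAddCommGroup G] [NormedSpace 𝕜 G] [CompleteSpace G]
    (p : Submodule 𝕜 E) (T : E →ₗ[𝕜] F) (g : p →ₗ[𝕜] G) (hg : DenseRange g)
    (hnorm : ∀ x, ‖g x‖ = ‖T x‖) :
    ∃ u : (p.map T).topologicalClosure ≃ₗᵢ[𝕜] G,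
      ∀ x : p, ∀ h : T x ∈ (p.map T).topologicalClosure, u ⟨T x, h⟩ = g x := by
  have : CompleteSpace (p.map T).topologicalClosure :=
    (p.map T).isClosed_topologicalClosure.completeSpace_coe
  let e : p →ₗ[𝕜] (p.map T).topologicalClosure := (T.domRestrict p).codRestrict _
    fun x ↦ (p.map T).le_topologicalClosure (mem_map_of_mem x.2)
  have he : DenseRange e := by
    refine Topology.IsEmbedding.subtypeVal.isInducing.dense_iff.mpr fun y ↦ ?_
    have hrange : Subtype.val '' Set.range e = (p.map T : Set F) := by
      rw [← Set.range_comp]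
      exact congrArg SetLike.coe (LinearMap.range_domRestrict p T)
    rw [hrange, ← topologicalClosure_coe]
    exact y.2
  exact ⟨(LinearEquiv.refl 𝕜 p).extendOfIsometry e g he hg hnorm,
    fun x _ ↦ LinearEquiv.extendOfIsometry_eq _ e g he hg hnorm x⟩

theorem ContinuousLinearMap.ker_mem_invtSubmodule_of_commute {R M : Type*} [Semiring R]
    [AddCommMonoid M] [TopologicalSpace M] [Module R M] {f g : M →L[R] M} (h : Commute f g) :
    LinearMap.ker (g : M →ₗ[R] M) ∈ Module.End.invtSubmodule (f : M →ₗ[R] M) :=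
  (Module.End.mem_invtSubmodule_iff_forall_mem_of_mem _).mpr fun x hx ↦ by
    simp only [LinearMap.mem_ker, ContinuousLinearMap.coe_coe] at hx ⊢
    calc g (f x) = f (g x) := (ContinuousLinearMap.ext_iff.mp h.eq x).symm
      _ = 0 := by rw [hx, map_zero]

section

variable {𝕜 E F : Type*} [RCLike 𝕜] [NormedAddCommGroup E] [InnerProductSpace 𝕜 E]

theorem LinearMap.IsSymmetric.norm_sq_apply {S : E →ₗ[𝕜] E} (hS : S.IsSymmetric) (x : E) :
    ‖S x‖ ^ 2 = re ⟪S (S x), x⟫_𝕜 := by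
  rw [hS, inner_self_eq_norm_sq]

theorem LinearMap.IsSymmetric.denseRange_of_ker_eq_bot [CompleteSpace E] {S : E →ₗ[𝕜] E}
    (hS : S.IsSymmetric) (hker : LinearMap.ker S = ⊥) : DenseRange S := by
  rw [DenseRange, ← LinearMap.coe_range, dense_iff_topologicalClosure_eq_top,
    topologicalClosure_eq_top_iff, hS.orthogonal_range, hker]

theorem LinearMap.IsSymmetric.exists_linearIsometryEquiv_orthogonal [CompleteSpace E]
    [NormedAddCommGroup F] [InnerProductSpace 𝕜 F] [CompleteSpace F]
    {S : E →ₗ[𝕜] E} (hS : S.IsSymmetric) {T : E →ₗ[𝕜] F} (hST : ∀ x, ‖S x‖ = ‖T x‖)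
    {L : Submodule 𝕜 E} (hL : L ∈ Module.End.invtSubmodule S) (hker : LinearMap.ker S ≤ L) :
    ∃ u : (Lᗮ.map T).topologicalClosure ≃ₗᵢ[𝕜] Lᗮ, ∀ z ∈ Lᗮ,
      ∀ h : T z ∈ (Lᗮ.map T).topologicalClosure, ((u ⟨T z, h⟩ : Lᗮ) : E) = S z := by
  have hL' := hS.orthogonalComplement_mem_invtSubmodule hL
  let g := S.restrict ((Module.End.mem_invtSubmodule_iff_forall_mem_of_mem _).mp hL')
  have hg : DenseRange g := by
    refine (hS.restrict_invariant _).denseRange_of_ker_eq_bot (LinearMap.ker_eq_bot'.mpr ?_)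
    intro z hz
    have hzL : (z : E) ∈ L := hker (congrArg Subtype.val hz)
    exact Subtype.ext ((L.orthogonal_disjoint).le_bot ⟨hzL, z.2⟩)
  obtain ⟨u, hu⟩ := Lᗮ.exists_linearIsometryEquiv_topologicalClosure_map T g hg
    fun z ↦ hST z
  exact ⟨u, fun z hz h ↦ congrArg Subtype.val (hu ⟨z, hz⟩ h)⟩

theorem LinearMap.IsSymmetric.exists_linearIsometryEquiv_orthogonal_ker_sup_ker [CompleteSpace E]
    [NormedAddCommGroup F] [InnerProductSpace 𝕜 F] [CompleteSpace F] {A S : E →L[𝕜] E}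
    (hS : (S : E →ₗ[𝕜] E).IsSymmetric) (hSA : Commute S A)
    (hker : LinearMap.ker (S : E →ₗ[𝕜] E) ≤
      LinearMap.ker ((1 - A : E →L[𝕜] E) : E →ₗ[𝕜] E) ⊔ LinearMap.ker (A : E →ₗ[𝕜] E))
    {T : E →ₗ[𝕜] F} (hST : ∀ x, ‖S x‖ = ‖T x‖) :
    let Z := (LinearMap.ker ((1 - A : E →L[𝕜] E) : E →ₗ[𝕜] E) ⊔ LinearMap.ker (A : E →ₗ[𝕜] E))ᗮ
    ∃ u : (Z.map T).topologicalClosure ≃ₗᵢ[𝕜] Z, ∀ z ∈ Z,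
      ∀ h : T z ∈ (Z.map T).topologicalClosure, ((u ⟨T z, h⟩ : Z) : E) = S z :=
  hS.exists_linearIsometryEquiv_orthogonal hST
    (Module.End.invtSubmodule.sup_mem
      (ContinuousLinearMap.ker_mem_invtSubmodule_of_commute ((Commute.one_right S).sub_right hSA))
      (ContinuousLinearMap.ker_mem_invtSubmodule_of_commute hSA))
    hker

end

/-- For the positive square roots `S` of `A` and `S'` of `1 - A` one has `‖S y‖ = ‖P₀ y‖` and
`‖S' y‖ = ‖P₁ y‖` for all `y ∈ Y`; moreover there are unitaries `u₀ : Z₀ → Z` and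
`u₁ : Z₁ → Z` with `S z = u₀ (P₀ z)` and `S' z = u₁ (P₁ z)` for all `z ∈ Z`. -/
theorem stmt_6 (Y : Submodule ℂ (WithLp 2 (H₀ × H₁)))
    (hY : IsClosed (Y : Set (WithLp 2 (H₀ × H₁))))
    (A : Y →L[ℂ] Y)
    (hA : ∀ x y : Y,
      ⟪A x, y⟫_ℂ = ⟪P0 (x : WithLp 2 (H₀ × H₁)), P0 (y : WithLp 2 (H₀ × H₁))⟫_ℂ)
    (Y₀ Y₁ Z : Submodule ℂ Y)
    (hY₀ : Y₀ = LinearMap.ker ((1 - A : Y →L[ℂ] Y) : Y →ₗ[ℂ] Y)) (hY₁ : Y₁ = LinearMap.ker (A : Y →ₗ[ℂ] Y))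
    (hZ : Z = (Y₀ ⊔ Y₁)ᗮ)
    (Z₀ : Submodule ℂ H₀) (hZ₀ : Z₀ = (Submodule.map (P0 ∘ₗ Y.subtype) Z).topologicalClosure)
    (Z₁ : Submodule ℂ H₁) (hZ₁ : Z₁ = (Submodule.map (P1 ∘ₗ Y.subtype) Z).topologicalClosure) :
    (∀ S : Y →L[ℂ] Y, (∀ x y : Y, ⟪S x, y⟫_ℂ = ⟪x, S y⟫_ℂ) →
      (∀ x : Y, 0 ≤ (⟪S x, x⟫_ℂ).re) → S ∘L S = A →
      ((∀ y : Y, ‖S y‖ = ‖P0 (y : WithLp 2 (H₀ × H₁))‖) ∧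
        ∃ u₀ : Z₀ ≃ₗᵢ[ℂ] Z, ∀ z : Y, z ∈ Z →
          ∀ h : P0 (z : WithLp 2 (H₀ × H₁)) ∈ Z₀,
            ((u₀ ⟨P0 (z : WithLp 2 (H₀ × H₁)), h⟩ : Z) : Y) = S z)) ∧
    (∀ S : Y →L[ℂ] Y, (∀ x y : Y, ⟪S x, y⟫_ℂ = ⟪x, S y⟫_ℂ) →
      (∀ x : Y, 0 ≤ (⟪S x, x⟫_ℂ).re) → S ∘L S = 1 - A →
      ((∀ y : Y, ‖S y‖ = ‖P1 (y : WithLp 2 (H₀ × H₁))‖) ∧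
        ∃ u₁ : Z₁ ≃ₗᵢ[ℂ] Z, ∀ z : Y, z ∈ Z →
          ∀ h : P1 (z : WithLp 2 (H₀ × H₁)) ∈ Z₁,
            ((u₁ ⟨P1 (z : WithLp 2 (H₀ × H₁)), h⟩ : Z) : Y) = S z)) := by
  have : CompleteSpace Y := hY.completeSpace_coe
  subst hZ hZ₀ hZ₁ hY₀ hY₁
  have hcomm (S : Y →L[ℂ] Y) : Commute S (S ∘L S) := (Commute.refl S).mul_right (Commute.refl S)
  have hker (S : Y →L[ℂ] Y) : LinearMap.ker (S : Y →ₗ[ℂ] Y) ≤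
      LinearMap.ker ((S ∘L S : Y →L[ℂ] Y) : Y →ₗ[ℂ] Y) :=
    LinearMap.ker_le_ker_comp _ _
  refine ⟨fun S hS _ hSA ↦ ?_, fun S hS _ hSA ↦ ?_⟩
  · have hnorm (y : Y) : ‖S y‖ = ‖P0 (y : WithLp 2 (H₀ × H₁))‖ := by
      refine (sq_eq_sq₀ (norm_nonneg _) (norm_nonneg _)).mp
        ((LinearMap.IsSymmetric.norm_sq_apply hS y).trans ?_)
      change re ⟪(S ∘L S) y, y⟫_ℂ = _
      rw [hSA, hA, inner_self_eq_norm_sq]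
    exact ⟨hnorm, LinearMap.IsSymmetric.exists_linearIsometryEquiv_orthogonal_ker_sup_ker hS
      (hSA ▸ hcomm S) (le_sup_of_le_right (hSA ▸ hker S)) hnorm⟩
  · have hnorm (y : Y) : ‖S y‖ = ‖P1 (y : WithLp 2 (H₀ × H₁))‖ := by
      refine (sq_eq_sq₀ (norm_nonneg _) (norm_nonneg _)).mp
        ((LinearMap.IsSymmetric.norm_sq_apply hS y).trans ?_)
      change re ⟪(S ∘L S) y, y⟫_ℂ = _
      rw [hSA, sub_apply, one_apply_eq_self, inner_sub_left,
        map_sub, hA, inner_self_eq_norm_sq, inner_self_eq_norm_sq, Submodule.coe_norm,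
        WithLp.prod_norm_sq_eq_of_L2]
      exact add_sub_cancel_left _ _
    have hSA' : Commute S A := by
      rw [← sub_sub_cancel 1 A, ← hSA]
      exact (Commute.one_right S).sub_right (hcomm S)
    exact ⟨hnorm, LinearMap.IsSymmetric.exists_linearIsometryEquiv_orthogonal_ker_sup_ker hS
      hSA' (le_sup_of_le_left (hSA ▸ hker S)) hnorm⟩
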